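/- arXiv:1307.4472 — 2 statements merged into one kernel-verified Lean document; each statement's English description precedes it below -/
import Mathlib

section
/- Let S be a commutative semiring and f : Σ* → S a word function. If f is recognized by a weighted automaton over S, then there exists a finitely generated subsemimodule M of the S-semimodule of all word functions Σ* → S such that f ∈ M and M is stable, i.e., for every word w ∈ Σ* and every g ∈ M, the function w⁻¹g defined by (w⁻¹g)(u) = g(w ∘ u) is also in M. -/
/-
The entries of `μ(u) γ`, as functions of `u`, span a finitely generated subsemimodule containing
`f = ∑ᵢ αᵢ (μ(·) γ)ᵢ`. Since `μ(w u) = μ(w) μ(u)`, the `w`-translate of the `i`-th generator is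
`∑ⱼ μ(w)ᵢⱼ` times the `j`-th one, and translation by `w` is linear, so the span is stable.
-/

open Matrix

def wordProd {S : Type*} [CommSemiring S] {A : Type*} {r : ℕ}
    (μ : A → Matrix (Fin r) (Fin r) S) (w : List A) : Matrix (Fin r) (Fin r) S :=
  (w.map μ).prod

lemma wordProd_append {S : Type*} [CommSemiring S] {A : Type*} {r : ℕ}
    (μ : A → Matrix (Fin r) (Fin r) S) (w u : List A) :
    wordProd μ (w ++ u) = wordProd μ w * wordProd μ u := by
  simp [wordProd]

section StateFunctions

variable {S A : Type*} [CommSemiring S] {r : ℕ}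

def stateFunction (μ : A → Matrix (Fin r) (Fin r) S) (γ : Fin r → S) (i : Fin r) :
    List A → S :=
  fun u => (wordProd μ u *ᵥ γ) i

lemma sum_smul_stateFunction (μ : A → Matrix (Fin r) (Fin r) S) (α γ : Fin r → S) :
    ∑ i, α i • stateFunction μ γ i = fun w => α ⬝ᵥ (wordProd μ w *ᵥ γ) := by
  funext w
  simp [stateFunction, dotProduct, Finset.sum_apply]

lemma funLeft_append_stateFunction (μ : A → Matrix (Fin r) (Fin r) S) (γ : Fin r → S)
    (w : List A) (i : Fin r) :
    LinearMap.funLeft S S (w ++ ·) (stateFunction μ γ i) =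
      ∑ j, wordProd μ w i j • stateFunction μ γ j := by
  funext u
  simp only [LinearMap.funLeft_apply, stateFunction, wordProd_append, ← mulVec_mulVec,
    Finset.sum_apply, Pi.smul_apply, smul_eq_mul]
  rfl

lemma map_funLeft_append_span_stateFunction_le (μ : A → Matrix (Fin r) (Fin r) S)
    (γ : Fin r → S) (w : List A) :
    (Submodule.span S (Set.range (stateFunction μ γ))).map (LinearMap.funLeft S S (w ++ ·)) ≤
      Submodule.span S (Set.range (stateFunction μ γ)) := by
  rw [Submodule.map_span_le]
  rintro _ ⟨i, rfl⟩
  exact Submodule.mem_span_range_iff_exists_fun S |>.mpr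
    ⟨_, (funLeft_append_stateFunction μ γ w i).symm⟩

end StateFunctions

theorem recognizable_mem_fg_stable_submodule_general {S A : Type*} [CommSemiring S]
    (f : List A → S)
    (h : ∃ (r : ℕ) (α γ : Fin r → S) (μ : A → Matrix (Fin r) (Fin r) S),
      ∀ w : List A, f w = α ⬝ᵥ (wordProd μ w *ᵥ γ)) :
    ∃ M : Submodule S (List A → S), M.FG ∧ f ∈ M ∧
      ∀ (w : List A) (g : List A → S), g ∈ M → (fun u => g (w ++ u)) ∈ M := by
  obtain ⟨r, α, γ, μ, hf⟩ := h
  refine ⟨Submodule.span S (Set.range (stateFunction μ γ)),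
    Submodule.fg_span (Set.finite_range _), ?_, ?_⟩
  · rw [funext hf, ← sum_smul_stateFunction μ α γ]
    exact Submodule.mem_span_range_iff_exists_fun S |>.mpr ⟨α, rfl⟩
  · intro w g hg
    exact map_funLeft_append_span_stateFunction_le μ γ w (Submodule.mem_map_of_mem hg)

/-- If `f` is recognized by a weighted automaton over `S`, then `f` belongs to a
finitely generated stable subsemimodule of `S^{Σ*}`. -/
theorem recognizable_mem_fg_stable_submodule {S A : Type*} [CommSemiring S] [Fintype A]
    (f : List A → S)
    (h : ∃ (r : ℕ) (α γ : Fin r → S) (μ : A → Matrix (Fin r) (Fin r) S),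
      ∀ w : List A, f w = α ⬝ᵥ (wordProd μ w *ᵥ γ)) :
    ∃ M : Submodule S (List A → S), M.FG ∧ f ∈ M ∧
      ∀ (w : List A) (g : List A → S), g ∈ M → (fun u => g (w ++ u)) ∈ M :=
  recognizable_mem_fg_stable_submodule_general f h
end

section
/- Let S be a commutative semiring and f : Σ* → S a word function. If there exists a finitely generated stable subsemimodule M ⊆ S^{Σ*} containing f, then f is recognizable by some weighted automaton over S. (Jacob's theorem, one direction.) -/
/-!
Take generators `g₁, …, g_r` of `M`. Stability writes each left quotient `u ↦ gᵢ (a :: u)` as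
`∑ⱼ μ_a i j • gⱼ`, so the vector `G w = (gᵢ w)ᵢ` satisfies `G (a :: w) = μ_a *ᵥ G w`, hence
`G w = μ_w *ᵥ G []`. Writing `f = ∑ᵢ αᵢ • gᵢ` gives `f w = α ⬝ᵥ (μ_w *ᵥ γ)` with `γ = G []`.
-/

open Matrix

section

variable {S A : Type*} [CommSemiring S]

@[simp]
theorem wordProd_nil {r : ℕ} (μ : A → Matrix (Fin r) (Fin r) S) : wordProd μ [] = 1 := rfl

@[simp]
theorem wordProd_cons {r : ℕ} (μ : A → Matrix (Fin r) (Fin r) S) (a : A) (w : List A) :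
    wordProd μ (a :: w) = μ a * wordProd μ w := by
  simp [wordProd]

theorem eq_wordProd_mulVec_of_cons {r : ℕ} {μ : A → Matrix (Fin r) (Fin r) S}
    {G : List A → Fin r → S} (hG : ∀ a u, G (a :: u) = μ a *ᵥ G u) (w : List A) :
    G w = wordProd μ w *ᵥ G [] := by
  induction w with
  | nil => simp
  | cons a w ih => rw [hG, ih, wordProd_cons, mulVec_mulVec]

theorem exists_dotProduct_of_mem_span_range {ι X : Type*} [Fintype ι] {g : ι → X → S}
    {f : X → S} (hf : f ∈ Submodule.span S (Set.range g)) :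
    ∃ α : ι → S, ∀ x, f x = α ⬝ᵥ fun i => g i x := by
  obtain ⟨α, rfl⟩ := (Submodule.mem_span_range_iff_exists_fun S).mp hf
  exact ⟨α, fun x => by simp [dotProduct]⟩

theorem exists_matrix_cons_eq_mulVec {ι : Type*} [Fintype ι] {g : ι → List A → S}
    (hg : ∀ a i, (fun u => g i (a :: u)) ∈ Submodule.span S (Set.range g)) :
    ∃ μ : A → Matrix ι ι S, ∀ a u, (fun i => g i (a :: u)) = μ a *ᵥ fun i => g i u := by
  choose μ hμ using fun a i => exists_dotProduct_of_mem_span_range (hg a i)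
  exact ⟨fun a => Matrix.of (μ a), fun a u => funext fun i => hμ a i u⟩

end

theorem recognizable_of_mem_fg_stable_submodule_general {S A : Type*} [CommSemiring S]
    (f : List A → S)
    (h : ∃ M : Submodule S (List A → S), M.FG ∧ f ∈ M ∧
      ∀ (w : List A) (g : List A → S), g ∈ M → (fun u => g (w ++ u)) ∈ M) :
    ∃ (r : ℕ) (α γ : Fin r → S) (μ : A → Matrix (Fin r) (Fin r) S),
      ∀ w : List A, f w = α ⬝ᵥ (wordProd μ w *ᵥ γ) := by
  obtain ⟨M, hfg, hf, hstable⟩ := h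
  obtain ⟨r, g, rfl⟩ := Submodule.fg_iff_exists_fin_generating_family.mp hfg
  obtain ⟨μ, hμ⟩ := exists_matrix_cons_eq_mulVec fun a i =>
    hstable [a] (g i) (Submodule.subset_span ⟨i, rfl⟩)
  obtain ⟨α, hα⟩ := exists_dotProduct_of_mem_span_range hf
  exact ⟨r, α, fun i => g i [], μ, fun w => by rw [hα, eq_wordProd_mulVec_of_cons (G := fun u i => g i u) hμ]⟩

/-- Jacob's theorem, one direction: if `f` lies in a finitely generated stable
subsemimodule of `S^{Σ*}`, then `f` is recognizable by a weighted automaton. -/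
theorem recognizable_of_mem_fg_stable_submodule {S A : Type*} [CommSemiring S] [Fintype A]
    (f : List A → S)
    (h : ∃ M : Submodule S (List A → S), M.FG ∧ f ∈ M ∧
      ∀ (w : List A) (g : List A → S), g ∈ M → (fun u => g (w ++ u)) ∈ M) :
    ∃ (r : ℕ) (α γ : Fin r → S) (μ : A → Matrix (Fin r) (Fin r) S),
      ∀ w : List A, f w = α ⬝ᵥ (wordProd μ w *ᵥ γ) :=
  recognizable_of_mem_fg_stable_submodule_general f h
end
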